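/- Let (a,b) be a fictitious-play trajectory. Suppose Alice's cut in round t satisfies 0 < a_t < 1, and let τ ≥ t be such that round τ−1 is axis-crossing and no round strictly between t−1 and τ−1 is axis-crossing (i.e. τ−1 is the first axis-crossing round strictly after t−1). Then ρ_τ ≥ ⌊ρ_{t−1}⌋ + 1. -/

import Mathlib

/-! In the coordinates `(α, β)` the trajectory moves like a lattice walk: while `α > 0` Alice cuts
at `1` and `β` grows by one, while `β < 0` Bob picks `R` and `α` grows by one (and symmetrically).
An interior cut in round `t` forces `α_{t-1} = 0`; up to the symmetry `(α, β) ↦ (-α, -β)` we then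
have `α_t = 1` and `β_{t-1} ≤ 0`. If `β_t > 0`, then `α` returns to `0` one round later and
`ρ_{t-1} < 1`. Otherwise both coordinates climb by one per round until `β` reaches `(-1, 0]` at the
crossing, and counting the rounds gives the bound, since `|β_t - β_{t-1}| < 1`. -/

open MeasureTheory

/-- Bob's choice of the left or right piece. -/
inductive Choice
  | L
  | R
deriving DecidableEq

/-- The cumulative valuation `V(x) = ∫_0^x v`. -/
noncomputable def cumul (v : ℝ → ℝ) (x : ℝ) : ℝ := ∫ y in (0:ℝ)..x, v y

/-- `v` is an integrable value density on `[0,1]`, bounded between `lo` and `hi`,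
integrating to `1`. -/
def IsDensity (lo hi : ℝ) (v : ℝ → ℝ) : Prop :=
  IntervalIntegrable v volume 0 1 ∧
  (∀ x ∈ Set.Icc (0:ℝ) 1, lo ≤ v x ∧ v x ≤ hi) ∧
  (∫ y in (0:ℝ)..1, v y) = 1

/-- Alice's round-`t` utility: if Bob picks `L` she gets `[a_t,1]`, else `[0,a_t]`. -/
noncomputable def uA (vA : ℝ → ℝ) (a : ℕ → ℝ) (b : ℕ → Choice) (t : ℕ) : ℝ :=
  if b t = Choice.L then 1 - cumul vA (a t) else cumul vA (a t)

/-- Bob's round-`t` utility: if he picks `L` he gets `[0,a_t]`, else `[a_t,1]`. -/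
noncomputable def uB (vB : ℝ → ℝ) (a : ℕ → ℝ) (b : ℕ → Choice) (t : ℕ) : ℝ :=
  if b t = Choice.L then cumul vB (a t) else 1 - cumul vB (a t)

/-- `α_t = r_t − ℓ_t`: number of `R` choices minus number of `L` choices up to round `t`. -/
noncomputable def alphaFP (b : ℕ → Choice) (t : ℕ) : ℝ :=
  ∑ i ∈ Finset.Icc 1 t, (if b i = Choice.R then (1:ℝ) else -1)

/-- `β_t = Σ_{i=1}^t (2 V_B(a_i) − 1)`. -/
noncomputable def betaFP (vB : ℝ → ℝ) (a : ℕ → ℝ) (t : ℕ) : ℝ :=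
  ∑ i ∈ Finset.Icc 1 t, (2 * cumul vB (a i) - 1)

/-- The radius `ρ_t = |α_t| + |β_t|`. -/
noncomputable def rhoFP (vB : ℝ → ℝ) (a : ℕ → ℝ) (b : ℕ → Choice) (t : ℕ) : ℝ :=
  |alphaFP b t| + |betaFP vB a t|

/-- `(a,b)` is a fictitious-play trajectory. -/
def IsFictitiousPlay (vB : ℝ → ℝ) (a : ℕ → ℝ) (b : ℕ → Choice) : Prop :=
  ∀ t : ℕ,
    (0 < alphaFP b t → a (t+1) = 1) ∧
    (alphaFP b t < 0 → a (t+1) = 0) ∧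
    (0 < betaFP vB a t → b (t+1) = Choice.L) ∧
    (betaFP vB a t < 0 → b (t+1) = Choice.R)

/-- Round `t` is axis-crossing. -/
def AxisCrossing (vB : ℝ → ℝ) (a : ℕ → ℝ) (b : ℕ → Choice) (t : ℕ) : Prop :=
  alphaFP b t = 0 ∨
  (betaFP vB a t ≤ 0 ∧ 0 < betaFP vB a (t+1)) ∨
  (0 ≤ betaFP vB a t ∧ betaFP vB a (t+1) < 0)

open Set

lemma floor_add_one_le_of_lt {x y : ℝ} {z : ℤ} (hx : x < z) (hy : (z : ℝ) ≤ y) :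
    (⌊x⌋ : ℝ) + 1 ≤ y := by
  have : ⌊x⌋ + 1 ≤ z := Int.floor_lt.2 hx
  exact le_trans (by exact_mod_cast this) hy

/-- The update rules of fictitious play in the coordinates `(α, β)`, in a form invariant under
`(α, β) ↦ (-α, -β)`. -/
structure IsFPDynamics (A B : ℕ → ℝ) : Prop where
  beta_succ_of_alpha_pos : ∀ s, 0 < A s → B (s + 1) = B s + 1
  beta_succ_of_alpha_neg : ∀ s, A s < 0 → B (s + 1) = B s - 1
  alpha_succ_of_beta_neg : ∀ s, B s < 0 → A (s + 1) = A s + 1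
  alpha_succ_of_beta_pos : ∀ s, 0 < B s → A (s + 1) = A s - 1
  abs_alpha_succ_sub : ∀ s, |A (s + 1) - A s| = 1

/-- `AxisCrossing vB a b` is `IsCrossing (alphaFP b) (betaFP vB a)` by definition. -/
def IsCrossing (A B : ℕ → ℝ) (s : ℕ) : Prop :=
  A s = 0 ∨ (B s ≤ 0 ∧ 0 < B (s + 1)) ∨ (0 ≤ B s ∧ B (s + 1) < 0)

lemma isCrossing_neg {A B : ℕ → ℝ} {s : ℕ} : IsCrossing (-A) (-B) s ↔ IsCrossing A B s := by
  simp only [IsCrossing, Pi.neg_apply, neg_eq_zero, neg_nonpos, neg_pos, neg_nonneg, neg_lt_zero]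
  tauto

namespace IsFPDynamics

variable {A B : ℕ → ℝ}

lemma neg (h : IsFPDynamics A B) : IsFPDynamics (-A) (-B) where
  beta_succ_of_alpha_pos s hs := by
    simp only [Pi.neg_apply] at hs ⊢
    rw [h.beta_succ_of_alpha_neg s (neg_pos.1 hs)]; ring
  beta_succ_of_alpha_neg s hs := by
    simp only [Pi.neg_apply] at hs ⊢
    rw [h.beta_succ_of_alpha_pos s (neg_lt_zero.1 hs)]; ring
  alpha_succ_of_beta_neg s hs := by
    simp only [Pi.neg_apply] at hs ⊢
    rw [h.alpha_succ_of_beta_pos s (neg_lt_zero.1 hs)]; ring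
  alpha_succ_of_beta_pos s hs := by
    simp only [Pi.neg_apply] at hs ⊢
    rw [h.alpha_succ_of_beta_neg s (neg_pos.1 hs)]; ring
  abs_alpha_succ_sub s := by
    simpa only [Pi.neg_apply, neg_sub_neg, abs_sub_comm] using h.abs_alpha_succ_sub s

lemma climb_of_not_isCrossing (h : IsFPDynamics A B) {n m : ℕ} (hA : 0 < A n) (hB : B n ≤ 0)
    (hfirst : ∀ j < m, ¬ IsCrossing A B (n + j)) :
    ∀ j ≤ m, A (n + j) = A n + j ∧ B (n + j) = B n + j ∧ B (n + j) ≤ 0 := by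
  intro j hj
  induction j with
  | zero => simpa using hB
  | succ j ih =>
    obtain ⟨hAj, hBj, hBj0⟩ := ih (by omega)
    have hB' := h.beta_succ_of_alpha_pos (n + j) (by rw [hAj]; positivity)
    have hB'0 : B (n + j + 1) ≤ 0 := by
      by_contra! hpos
      exact hfirst j (by omega) (Or.inr (Or.inl ⟨hBj0, hpos⟩))
    have hA' := h.alpha_succ_of_beta_neg (n + j) (by linarith)
    rw [← add_assoc, hA', hB', hAj, hBj]
    push_cast
    exact ⟨by ring, by ring, by linarith⟩

lemma eq_add_two_of_beta_succ_pos (h : IsFPDynamics A B) {n c : ℕ} (hA₁ : A (n + 1) = 1)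
    (hpos : 0 < B (n + 1)) (hnc : n < c) (hcross : IsCrossing A B c)
    (hfirst : ∀ s, n < s → s < c → ¬ IsCrossing A B s) : c = n + 1 + 1 ∧ A (n + 1 + 1) = 0 := by
  have hA₂ : A (n + 1 + 1) = 0 := by rw [h.alpha_succ_of_beta_pos _ hpos, hA₁]; norm_num
  refine ⟨?_, hA₂⟩
  have hB₂ := h.beta_succ_of_alpha_pos (n + 1) (by rw [hA₁]; exact one_pos)
  have : c ≠ n + 1 := by
    rintro rfl
    rcases hcross with h0 | h1 | h2 <;> linarith
  by_contra hne
  exact hfirst (n + 1 + 1) (by omega) (by omega) (Or.inl hA₂)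

lemma floor_radius_add_one_le_of_alpha_succ_eq_one (h : IsFPDynamics A B) {n c : ℕ}
    (hA₀ : A n = 0) (hA₁ : A (n + 1) = 1) (hB₁ : B (n + 1) < B n + 1) (hnc : n < c)
    (hcross : IsCrossing A B c) (hfirst : ∀ s, n < s → s < c → ¬ IsCrossing A B s) :
    (⌊|A n| + |B n|⌋ : ℝ) + 1 ≤ |A (c + 1)| + |B (c + 1)| := by
  have hBn : B n ≤ 0 := by
    by_contra! hpos
    linarith [h.alpha_succ_of_beta_pos n hpos]
  rw [hA₀, abs_zero, zero_add, abs_of_nonpos hBn]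
  rcases lt_or_ge 0 (B (n + 1)) with hpos | hnonpos
  · obtain ⟨rfl, hA₂⟩ := h.eq_add_two_of_beta_succ_pos hA₁ hpos hnc hcross hfirst
    have hA₃ : |A (n + 1 + 1 + 1)| = 1 := by simpa [hA₂] using h.abs_alpha_succ_sub (n + 1 + 1)
    exact floor_add_one_le_of_lt (z := 1) (by push_cast; linarith)
      (by push_cast; linarith [abs_nonneg (B (n + 1 + 1 + 1))])
  · obtain ⟨m, rfl⟩ : ∃ m, c = n + 1 + m := ⟨c - (n + 1), by omega⟩
    obtain ⟨hAc, hBc, hBc0⟩ := h.climb_of_not_isCrossing (by rw [hA₁]; exact one_pos) hnonpos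
      (fun j hj => hfirst _ (by omega) (by omega)) m le_rfl
    rw [hA₁] at hAc
    have hAc0 : 0 < A (n + 1 + m) := by rw [hAc]; positivity
    have hBc' := h.beta_succ_of_alpha_pos _ hAc0
    have hBgt : -1 < B (n + 1 + m) := by
      rcases hcross with h0 | h1 | h2
      · exact absurd h0 hAc0.ne'
      · linarith [h1.2]
      · linarith [h2.1, h2.2]
    rcases hBc0.lt_or_eq with hneg | hzero
    · have hA' := h.alpha_succ_of_beta_neg _ hneg
      refine floor_add_one_le_of_lt (z := m + 2) (by push_cast; linarith) ?_
      rw [hA', hAc, abs_of_pos (by positivity)]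
      push_cast
      linarith [abs_nonneg (B (n + 1 + m + 1))]
    · have hA' : (m : ℝ) ≤ |A (n + 1 + m + 1)| := by
        have := abs_sub_abs_le_abs_sub (A (n + 1 + m)) (A (n + 1 + m + 1))
        rw [abs_sub_comm, h.abs_alpha_succ_sub, hAc, abs_of_pos (by positivity)] at this
        linarith
      refine floor_add_one_le_of_lt (z := m + 1) (by push_cast; linarith) ?_
      rw [hBc', hzero, zero_add, abs_one]
      push_cast
      linarith

lemma floor_radius_add_one_le (h : IsFPDynamics A B) {n c : ℕ}
    (hA₀ : A n = 0) (hB₁ : |B (n + 1) - B n| < 1) (hnc : n < c)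
    (hcross : IsCrossing A B c) (hfirst : ∀ s, n < s → s < c → ¬ IsCrossing A B s) :
    (⌊|A n| + |B n|⌋ : ℝ) + 1 ≤ |A (c + 1)| + |B (c + 1)| := by
  have hA₁ := h.abs_alpha_succ_sub n
  rw [hA₀, sub_zero] at hA₁
  rcases (abs_eq zero_le_one).1 hA₁ with hA₁ | hA₁
  · exact h.floor_radius_add_one_le_of_alpha_succ_eq_one hA₀ hA₁
      (by linarith [(abs_lt.1 hB₁).2]) hnc hcross hfirst
  · simpa only [Pi.neg_apply, abs_neg] using
      h.neg.floor_radius_add_one_le_of_alpha_succ_eq_one (by simp [hA₀]) (by simp [hA₁])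
        (by simp only [Pi.neg_apply]; linarith [(abs_lt.1 hB₁).1]) hnc (isCrossing_neg.2 hcross)
        (fun s hs hsc => isCrossing_neg.not.2 (hfirst s hs hsc))

end IsFPDynamics

lemma alphaFP_succ (b : ℕ → Choice) (s : ℕ) :
    alphaFP b (s + 1) = alphaFP b s + (if b (s + 1) = Choice.R then 1 else -1) :=
  Finset.sum_Icc_succ_top (by omega) _

lemma betaFP_succ (vB : ℝ → ℝ) (a : ℕ → ℝ) (s : ℕ) :
    betaFP vB a (s + 1) = betaFP vB a s + (2 * cumul vB (a (s + 1)) - 1) :=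
  Finset.sum_Icc_succ_top (by omega) _

namespace IsDensity

variable {lo hi : ℝ} {v : ℝ → ℝ}

lemma intervalIntegrable (hv : IsDensity lo hi v) {x y : ℝ} (hx : 0 ≤ x) (hxy : x ≤ y)
    (hy : y ≤ 1) : IntervalIntegrable v volume x y :=
  hv.1.mono_set (uIcc_subset_uIcc (mem_uIcc_of_le hx (hxy.trans hy))
    (mem_uIcc_of_le (hx.trans hxy) hy))

lemma mul_le_cumul (hv : IsDensity lo hi v) {x : ℝ} (hx : x ∈ Icc 0 1) : lo * x ≤ cumul v x := by
  have := intervalIntegral.integral_mono_on hx.1 intervalIntegrable_const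
    (hv.intervalIntegrable le_rfl hx.1 hx.2) fun y hy => (hv.2.1 y ⟨hy.1, hy.2.trans hx.2⟩).1
  simpa [mul_comm, cumul] using this

lemma cumul_le (hv : IsDensity lo hi v) {x : ℝ} (hx : x ∈ Icc 0 1) :
    cumul v x ≤ 1 - lo * (1 - x) := by
  have hint := hv.intervalIntegrable hx.1 hx.2 le_rfl
  have hsplit := intervalIntegral.integral_add_adjacent_intervals
    (hv.intervalIntegrable le_rfl hx.1 hx.2) hint
  have := intervalIntegral.integral_mono_on hx.2 intervalIntegrable_const hint
    fun y hy => (hv.2.1 y ⟨hx.1.trans hy.1, hy.2⟩).1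
  rw [hv.2.2] at hsplit
  simp only [intervalIntegral.integral_const, smul_eq_mul] at this
  unfold cumul
  linarith

end IsDensity

namespace IsFictitiousPlay

variable {vB : ℝ → ℝ} {a : ℕ → ℝ} {b : ℕ → Choice}

lemma isFPDynamics (hfp : IsFictitiousPlay vB a b) (hone : cumul vB 1 = 1) :
    IsFPDynamics (alphaFP b) (betaFP vB a) where
  beta_succ_of_alpha_pos s hs := by rw [betaFP_succ, (hfp s).1 hs, hone]; ring
  beta_succ_of_alpha_neg s hs := by
    rw [betaFP_succ, (hfp s).2.1 hs, cumul, intervalIntegral.integral_same]; ring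
  alpha_succ_of_beta_neg s hs := by rw [alphaFP_succ, if_pos ((hfp s).2.2.2 hs)]
  alpha_succ_of_beta_pos s hs := by
    rw [alphaFP_succ, if_neg (by simp [(hfp s).2.2.1 hs])]; ring
  abs_alpha_succ_sub s := by rw [alphaFP_succ]; split_ifs <;> simp

lemma alphaFP_eq_zero (hfp : IsFictitiousPlay vB a b) {n : ℕ} (h0 : 0 < a (n + 1))
    (h1 : a (n + 1) < 1) : alphaFP b n = 0 := by
  rcases lt_trichotomy (alphaFP b n) 0 with hneg | hzero | hpos
  · exact absurd ((hfp n).2.1 hneg) h0.ne'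
  · exact hzero
  · exact absurd ((hfp n).1 hpos) h1.ne

end IsFictitiousPlay

lemma abs_betaFP_succ_sub_lt_one {lo hi : ℝ} {vB : ℝ → ℝ} (hv : IsDensity lo hi vB) (hlo : 0 < lo)
    {a : ℕ → ℝ} {n : ℕ} (h0 : 0 < a (n + 1)) (h1 : a (n + 1) < 1) :
    |betaFP vB a (n + 1) - betaFP vB a n| < 1 := by
  have hx : a (n + 1) ∈ Icc 0 1 := ⟨h0.le, h1.le⟩
  have hpos := (mul_pos hlo h0).trans_le (hv.mul_le_cumul hx)
  have hlt := (hv.cumul_le hx).trans_lt (sub_lt_self 1 (mul_pos hlo (sub_pos.2 h1)))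
  rw [betaFP_succ, add_sub_cancel_left, abs_sub_lt_iff]
  constructor <;> linarith

theorem middle_cut_increases_radius_general
    (δ Δ : ℝ) (hδ : 0 < δ)
    (vB : ℝ → ℝ) (hB : IsDensity δ Δ vB)
    (a : ℕ → ℝ) (b : ℕ → Choice)
    (hfp : IsFictitiousPlay vB a b)
    (t τ : ℕ) (ht : 1 ≤ t)
    (ha0 : 0 < a t) (ha1 : a t < 1)
    (hstrict : t - 1 < τ - 1)
    (hcross : AxisCrossing vB a b (τ - 1))
    (hfirst : ∀ s : ℕ, t - 1 < s → s < τ - 1 → ¬ AxisCrossing vB a b s) :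
    (⌊rhoFP vB a b (t - 1)⌋ : ℝ) + 1 ≤ rhoFP vB a b τ := by
  obtain ⟨n, rfl⟩ : ∃ n, t = n + 1 := ⟨t - 1, by omega⟩
  obtain ⟨c, rfl⟩ : ∃ c, τ = c + 1 := ⟨τ - 1, by omega⟩
  simp only [Nat.add_sub_cancel] at hstrict hcross hfirst ⊢
  exact (hfp.isFPDynamics hB.2.2).floor_radius_add_one_le (hfp.alphaFP_eq_zero ha0 ha1)
    (abs_betaFP_succ_sub_lt_one hB hδ ha0 ha1) hstrict hcross hfirst

/-- If Alice cuts strictly inside the cake in round `t` and `τ−1` is the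
first axis-crossing round strictly after `t−1`, then `ρ_τ ≥ ⌊ρ_{t−1}⌋ + 1`. -/
theorem middle_cut_increases_radius
    (δ Δ : ℝ) (hδ : 0 < δ) (hδΔ : δ ≤ Δ)
    (vA vB : ℝ → ℝ) (hA : IsDensity δ Δ vA) (hB : IsDensity δ Δ vB)
    (a : ℕ → ℝ) (b : ℕ → Choice)
    (ha : ∀ t : ℕ, 1 ≤ t → a t ∈ Set.Icc (0:ℝ) 1)
    (hfp : IsFictitiousPlay vB a b)
    (t τ : ℕ) (ht : 1 ≤ t)
    (ha0 : 0 < a t) (ha1 : a t < 1)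
    (hτt : t ≤ τ) (hstrict : t - 1 < τ - 1)
    (hcross : AxisCrossing vB a b (τ - 1))
    (hfirst : ∀ s : ℕ, t - 1 < s → s < τ - 1 → ¬ AxisCrossing vB a b s) :
    (⌊rhoFP vB a b (t - 1)⌋ : ℝ) + 1 ≤ rhoFP vB a b τ :=
  middle_cut_increases_radius_general δ Δ hδ vB hB a b hfp t τ ht ha0 ha1 hstrict hcross hfirst
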